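/- arXiv:1202.5145 — 3 statements merged into one kernel-verified Lean document; each statement's English description precedes it below -/
import Mathlib

section
/- Let s > 0, B ≥ 1, J ∈ ℕ, and let (u_{lk}) for l ≥ J, 1 ≤ k ≤ 2^l, be i.i.d. uniform on [−B, B]. Let ψ_{lk}(x) = 2^{l/2} ψ(2^l x − k) with ‖ψ‖₁ ≤ 1, and define U_s(x) = 1 + Σ_{l≥J} Σ_k 2^{−l(s+1/2)} u_{lk} ψ_{lk}(x). Let K_j be the wavelet projection onto resolution level j ≥ J, so that K_j(U_s) − U_s = Σ_{l≥j} Σ_k 2^{−l(s+1/2)} u_{lk} ψ_{lk}. Then for every ε > 0 and j ≥ J: P(‖K_j(U_s) − U_s‖_∞ < ε B 2^{−js}) ≤ ε^{2^j}. -/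
/-!
Almost surely every coefficient lies in `[-B, B]`. At each point only two translates
`ψ(2^l x - k)` of a given level are nonzero, so the tail series converges uniformly and can be
integrated termwise against `ψ_{jk}`: orthonormality recovers the coefficient
`2^{-j(s+1/2)} u_{jk}`, while `‖ψ_{jk}‖₁ ≤ 2^{-j/2}` bounds the same integral by `2^{-j/2}` times
the sup-norm of the tail on `[0, 1]`. Hence the event forces `|u_{jk}| < εB` for all `2^j`
coefficients of level `j`; these are independent and each has probability at most `ε`.
-/

open MeasureTheory ProbabilityTheory Set

section SupportedInUnitInterval

variable {ψ : ℝ → ℝ}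

theorem exists_abs_le_of_support_subset_Icc (hψc : Continuous ψ)
    (hψsupp : ∀ x, x ∉ Icc (0:ℝ) 1 → ψ x = 0) : ∃ M, ∀ y, |ψ y| ≤ M :=
  hψc.bounded_above_of_compact_support (HasCompactSupport.intro isCompact_Icc hψsupp)

theorem sum_range_abs_comp_sub_natCast_le {M : ℝ} (hψM : ∀ y, |ψ y| ≤ M)
    (hψsupp : ∀ x, x ∉ Icc (0:ℝ) 1 → ψ x = 0) (t : ℝ) (N : ℕ) :
    ∑ k ∈ Finset.range N, |ψ (t - k)| ≤ 2 * M := by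
  classical
  -- `t - k ∈ [0, 1]` forces `k ∈ {⌊t⌋₊ - 1, ⌊t⌋₊}`
  set S : Finset ℕ := {⌊t⌋₊ - 1, ⌊t⌋₊}
  have hvanish : ∀ k ∈ Finset.range N, k ∉ Finset.range N ∩ S → |ψ (t - k)| = 0 := by
    intro k hk hkS
    rw [abs_eq_zero]
    refine hψsupp _ fun ⟨h0, h1⟩ => hkS (Finset.mem_inter.2 ⟨hk, ?_⟩)
    have hkt : k ≤ ⌊t⌋₊ := Nat.le_floor (by linarith)
    have htk : ⌊t⌋₊ ≤ k + 1 := Nat.floor_le_of_le (by push_cast; linarith)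
    simp only [S, Finset.mem_insert, Finset.mem_singleton]
    omega
  have hcard : (Finset.range N ∩ S).card ≤ 2 :=
    (Finset.card_le_card Finset.inter_subset_right).trans (Finset.card_le_two)
  calc ∑ k ∈ Finset.range N, |ψ (t - k)| = ∑ k ∈ Finset.range N ∩ S, |ψ (t - k)| :=
        (Finset.sum_subset Finset.inter_subset_left hvanish).symm
    _ ≤ (Finset.range N ∩ S).card • M := Finset.sum_le_card_nsmul _ _ _ fun k _ => hψM _
    _ ≤ 2 * M := by
        rw [nsmul_eq_mul]
        exact mul_le_mul_of_nonneg_right (by exact_mod_cast hcard) ((abs_nonneg _).trans (hψM 0))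

theorem eq_zero_of_notMem_Ioo (hψc : Continuous ψ) (hψsupp : ∀ x, x ∉ Icc (0:ℝ) 1 → ψ x = 0)
    {x : ℝ} (hx : x ∉ Ioo 0 1) : ψ x = 0 := by
  have hclosed : IsClosed {y | ψ y = 0} := isClosed_eq hψc continuous_const
  have hlow : Iic (0:ℝ) ⊆ {y | ψ y = 0} := by
    rw [← closure_Iio]
    exact closure_minimal (fun y hy => hψsupp y fun h => not_le.2 hy h.1) hclosed
  have hhigh : Ici (1:ℝ) ⊆ {y | ψ y = 0} := by
    rw [← closure_Ioi]
    exact closure_minimal (fun y hy => hψsupp y fun h => not_le.2 hy h.2) hclosed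
  rcases le_or_gt x 0 with h | h
  · exact hlow h
  · exact hhigh (le_of_not_gt fun h' => hx ⟨h, h'⟩)

theorem intervalIntegral_eq_integral_of_support_subset_Icc (hψc : Continuous ψ)
    (hψsupp : ∀ x, x ∉ Icc (0:ℝ) 1 → ψ x = 0) {a b : ℝ} (ha : a ≤ 0) (hb : 1 ≤ b) :
    ∫ x in a..b, ψ x = ∫ x, ψ x := by
  rw [intervalIntegral.integral_of_le (by linarith)]
  refine setIntegral_eq_integral_of_forall_compl_eq_zero fun x hx => ?_
  exact eq_zero_of_notMem_Ioo hψc hψsupp fun h => hx ⟨by linarith [h.1], by linarith [h.2]⟩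

end SupportedInUnitInterval

noncomputable def dyadicWavelet (ψ : ℝ → ℝ) (l k : ℕ) (x : ℝ) : ℝ :=
  (2:ℝ) ^ ((l:ℝ) / 2) * ψ ((2:ℝ) ^ l * x - k)

section DyadicWavelet

variable {ψ : ℝ → ℝ}

theorem continuous_dyadicWavelet (hψc : Continuous ψ) (l k : ℕ) :
    Continuous (dyadicWavelet ψ l k) := by
  unfold dyadicWavelet
  fun_prop

theorem abs_dyadicWavelet_le {M : ℝ} (hψM : ∀ y, |ψ y| ≤ M) (l k : ℕ) (x : ℝ) :
    |dyadicWavelet ψ l k x| ≤ (2:ℝ) ^ ((l:ℝ) / 2) * M := by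
  rw [dyadicWavelet, abs_mul, abs_of_pos (by positivity)]
  gcongr
  exact hψM _

theorem sum_range_abs_dyadicWavelet_le {M : ℝ} (hψM : ∀ y, |ψ y| ≤ M)
    (hψsupp : ∀ x, x ∉ Icc (0:ℝ) 1 → ψ x = 0) (l N : ℕ) (x : ℝ) :
    ∑ k ∈ Finset.range N, |dyadicWavelet ψ l k x| ≤ (2:ℝ) ^ ((l:ℝ) / 2) * (2 * M) := by
  simp only [dyadicWavelet, abs_mul, abs_of_pos (show (0:ℝ) < 2 ^ ((l:ℝ) / 2) by positivity),
    ← Finset.mul_sum]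
  gcongr
  exact sum_range_abs_comp_sub_natCast_le hψM hψsupp _ N

theorem integral_abs_dyadicWavelet (hψc : Continuous ψ)
    (hψsupp : ∀ x, x ∉ Icc (0:ℝ) 1 → ψ x = 0) {j k : ℕ} (hk : k < 2 ^ j) :
    ∫ x in (0:ℝ)..1, |dyadicWavelet ψ j k x| = (2:ℝ) ^ (-(j:ℝ) / 2) * ∫ x in (0:ℝ)..1, |ψ x| := by
  have habs_supp : ∀ x, x ∉ Icc (0:ℝ) 1 → |ψ x| = 0 := fun x hx => by rw [hψsupp x hx, abs_zero]
  have hk' : (k:ℝ) + 1 ≤ 2 ^ j := by exact_mod_cast hk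
  have hscale : ∫ x in (0:ℝ)..1, |ψ ((2:ℝ) ^ j * x - k)|
      = ((2:ℝ) ^ j)⁻¹ * ∫ x in (0:ℝ)..1, |ψ x| := by
    rw [intervalIntegral.integral_comp_mul_sub (fun y => |ψ y|) (by positivity), smul_eq_mul,
      intervalIntegral_eq_integral_of_support_subset_Icc hψc.abs habs_supp (by simp) (by linarith),
      intervalIntegral_eq_integral_of_support_subset_Icc hψc.abs habs_supp le_rfl le_rfl]
  simp only [dyadicWavelet, abs_mul, abs_of_pos (show (0:ℝ) < 2 ^ ((j:ℝ) / 2) by positivity)]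
  rw [intervalIntegral.integral_const_mul, hscale, ← mul_assoc]
  congr 1
  rw [← Real.rpow_natCast, ← Real.rpow_neg zero_le_two, ← Real.rpow_add two_pos]
  ring_nf

end DyadicWavelet

noncomputable def waveletSeries (ψ : ℝ → ℝ) (a : ℕ → ℕ → ℝ) (x : ℝ) : ℝ :=
  ∑' l, ∑ k ∈ Finset.range (2 ^ l), a l k * dyadicWavelet ψ l k x

section WaveletSeries

variable {ψ : ℝ → ℝ}

theorem abs_sum_range_mul_dyadicWavelet_le {M C : ℝ} (hψM : ∀ y, |ψ y| ≤ M)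
    (hψsupp : ∀ x, x ∉ Icc (0:ℝ) 1 → ψ x = 0) {c : ℕ → ℝ} (hc : ∀ k, |c k| ≤ C) (l N : ℕ)
    (x : ℝ) :
    |∑ k ∈ Finset.range N, c k * dyadicWavelet ψ l k x| ≤ 2 * M * ((2:ℝ) ^ ((l:ℝ) / 2) * C) :=
  calc |∑ k ∈ Finset.range N, c k * dyadicWavelet ψ l k x|
      ≤ ∑ k ∈ Finset.range N, C * |dyadicWavelet ψ l k x| := by
        refine (Finset.abs_sum_le_sum_abs _ _).trans (Finset.sum_le_sum fun k _ => ?_)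
        rw [abs_mul]
        exact mul_le_mul_of_nonneg_right (hc k) (abs_nonneg _)
    _ ≤ C * ((2:ℝ) ^ ((l:ℝ) / 2) * (2 * M)) := by
        rw [← Finset.mul_sum]
        exact mul_le_mul_of_nonneg_left (sum_range_abs_dyadicWavelet_le hψM hψsupp l N x)
          ((abs_nonneg _).trans (hc 0))
    _ = 2 * M * ((2:ℝ) ^ ((l:ℝ) / 2) * C) := by ring

variable {a : ℕ → ℕ → ℝ} {A : ℕ → ℝ}

theorem abs_waveletSeries_le {M : ℝ} (hψM : ∀ y, |ψ y| ≤ M)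
    (hψsupp : ∀ x, x ∉ Icc (0:ℝ) 1 → ψ x = 0) (ha : ∀ l k, |a l k| ≤ A l)
    (hA : Summable fun l : ℕ => (2:ℝ) ^ ((l:ℝ) / 2) * A l) (x : ℝ) :
    |waveletSeries ψ a x| ≤ 2 * M * ∑' l : ℕ, (2:ℝ) ^ ((l:ℝ) / 2) * A l := by
  have hlevel l := abs_sum_range_mul_dyadicWavelet_le hψM hψsupp (ha l) l (2 ^ l) x
  rw [← tsum_mul_left, ← Real.norm_eq_abs]
  exact tsum_of_norm_bounded (hA.mul_left _).hasSum hlevel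

theorem integral_waveletSeries_mul_dyadicWavelet (hψc : Continuous ψ)
    (hψsupp : ∀ x, x ∉ Icc (0:ℝ) 1 → ψ x = 0)
    (horth : ∀ l k l' k' : ℕ, k < 2 ^ l → k' < 2 ^ l' →
      ∫ x in (0:ℝ)..1, dyadicWavelet ψ l k x * dyadicWavelet ψ l' k' x
        = if (l, k) = (l', k') then 1 else 0)
    (ha : ∀ l k, |a l k| ≤ A l) (hA : Summable fun l : ℕ => (2:ℝ) ^ ((l:ℝ) / 2) * A l)
    {j k : ℕ} (hk : k < 2 ^ j) :
    ∫ x in (0:ℝ)..1, waveletSeries ψ a x * dyadicWavelet ψ j k x = a j k := by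
  obtain ⟨M, hψM⟩ := exists_abs_le_of_support_subset_Icc hψc hψsupp
  set level : ℕ → ℝ → ℝ := fun l x => ∑ k ∈ Finset.range (2 ^ l), a l k * dyadicWavelet ψ l k x
  have hlevel_cont l : Continuous (level l) := by
    have := continuous_dyadicWavelet hψc
    fun_prop
  have hlevel_integral l : ∫ x in (0:ℝ)..1, level l x * dyadicWavelet ψ j k x
      = if l = j then a j k else 0 := by
    have := continuous_dyadicWavelet hψc
    simp only [level, Finset.sum_mul, mul_assoc]
    rw [intervalIntegral.integral_finsetSum fun k' _ =>
      Continuous.intervalIntegrable (by fun_prop) _ _]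
    simp only [intervalIntegral.integral_const_mul]
    rw [Finset.sum_congr rfl fun k' hk' => by rw [horth l k' j k (Finset.mem_range.1 hk') hk]]
    by_cases hlj : l = j
    · subst hlj
      simp [hk]
    · simp [hlj]
  have hlevel_le l x := abs_sum_range_mul_dyadicWavelet_le hψM hψsupp (ha l) l (2 ^ l) x
  have hseries x : HasSum (fun l => level l x * dyadicWavelet ψ j k x)
      (waveletSeries ψ a x * dyadicWavelet ψ j k x) := by
    have hsummable : Summable fun l => level l x :=
      (hA.mul_left (2 * M)).of_norm_bounded fun l => (Real.norm_eq_abs _).trans_le (hlevel_le l x)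
    exact hsummable.hasSum.mul_right _
  have hsum := intervalIntegral.hasSum_integral_of_dominated_convergence
    (F := fun l x => level l x * dyadicWavelet ψ j k x) (μ := volume)
    (fun (l : ℕ) _ => 2 * M * ((2:ℝ) ^ ((l:ℝ) / 2) * A l) * ((2:ℝ) ^ ((j:ℝ) / 2) * M))
    (fun l => ((hlevel_cont l).mul (continuous_dyadicWavelet hψc j k)).aestronglyMeasurable)
    (fun l => .of_forall fun x _ => by
      rw [Real.norm_eq_abs, abs_mul]
      exact mul_le_mul (hlevel_le l x) (abs_dyadicWavelet_le hψM j k x) (abs_nonneg _)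
        ((abs_nonneg _).trans (hlevel_le l x)))
    (.of_forall fun _ _ => (hA.mul_left _).mul_right _)
    intervalIntegrable_const (.of_forall fun x _ => hseries x) (a := 0) (b := 1)
  simp only [hlevel_integral] at hsum
  exact hsum.unique (hasSum_ite_eq j (a j k))

theorem rpow_mul_abs_le_iSup_abs_waveletSeries (hψc : Continuous ψ)
    (hψsupp : ∀ x, x ∉ Icc (0:ℝ) 1 → ψ x = 0) (hψ1 : ∫ x in (0:ℝ)..1, |ψ x| ≤ 1)
    (horth : ∀ l k l' k' : ℕ, k < 2 ^ l → k' < 2 ^ l' →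
      ∫ x in (0:ℝ)..1, dyadicWavelet ψ l k x * dyadicWavelet ψ l' k' x
        = if (l, k) = (l', k') then 1 else 0)
    (ha : ∀ l k, |a l k| ≤ A l) (hA : Summable fun l : ℕ => (2:ℝ) ^ ((l:ℝ) / 2) * A l)
    {j k : ℕ} (hk : k < 2 ^ j) :
    (2:ℝ) ^ ((j:ℝ) / 2) * |a j k| ≤ ⨆ x : Icc (0:ℝ) 1, |waveletSeries ψ a x| := by
  obtain ⟨M, hψM⟩ := exists_abs_le_of_support_subset_Icc hψc hψsupp
  set S := ⨆ x : Icc (0:ℝ) 1, |waveletSeries ψ a x|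
  have hS : ∀ x ∈ Icc (0:ℝ) 1, |waveletSeries ψ a x| ≤ S := fun x hx =>
    le_ciSup (f := fun x : Icc (0:ℝ) 1 => |waveletSeries ψ a x|)
      ⟨_, forall_mem_range.2 fun x => abs_waveletSeries_le hψM hψsupp ha hA x⟩ ⟨x, hx⟩
  have hS0 : 0 ≤ S := (abs_nonneg _).trans (hS 0 (left_mem_Icc.2 zero_le_one))
  have hcoeff : |a j k| ≤ S * (2:ℝ) ^ (-(j:ℝ) / 2) :=
    calc |a j k| = |∫ x in (0:ℝ)..1, waveletSeries ψ a x * dyadicWavelet ψ j k x| := by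
          rw [integral_waveletSeries_mul_dyadicWavelet hψc hψsupp horth ha hA hk]
      _ ≤ ∫ x in (0:ℝ)..1, S * |dyadicWavelet ψ j k x| := by
          have := continuous_dyadicWavelet hψc j k
          rw [← Real.norm_eq_abs]
          refine intervalIntegral.norm_integral_le_of_norm_le zero_le_one
            (.of_forall fun x hx => ?_)
            ((by fun_prop : Continuous fun x => S * |dyadicWavelet ψ j k x|).intervalIntegrable
              (μ := volume) _ _)
          rw [Real.norm_eq_abs, abs_mul]
          exact mul_le_mul_of_nonneg_right (hS x (Ioc_subset_Icc_self hx)) (abs_nonneg _)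
      _ = S * (2:ℝ) ^ (-(j:ℝ) / 2) * ∫ x in (0:ℝ)..1, |ψ x| := by
          rw [intervalIntegral.integral_const_mul, integral_abs_dyadicWavelet hψc hψsupp hk,
            mul_assoc]
      _ ≤ S * (2:ℝ) ^ (-(j:ℝ) / 2) := mul_le_of_le_one_right (by positivity) hψ1
  calc (2:ℝ) ^ ((j:ℝ) / 2) * |a j k| ≤ (2:ℝ) ^ ((j:ℝ) / 2) * (S * (2:ℝ) ^ (-(j:ℝ) / 2)) := by
        gcongr
    _ = S := by
        rw [mul_comm S, ← mul_assoc, ← Real.rpow_add two_pos, neg_div, add_neg_cancel,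
          Real.rpow_zero, one_mul]

end WaveletSeries

/-- `K_j(U_s) - U_s` for the coefficient array `c`. -/
noncomputable def waveletTail (ψ : ℝ → ℝ) (s : ℝ) (j : ℕ) (c : ℕ → ℕ → ℝ) (x : ℝ) : ℝ :=
  ∑' l : ℕ, if j ≤ l then
    ∑ k ∈ Finset.range (2 ^ l), (2:ℝ) ^ (-(l:ℝ) * (s + 1 / 2)) * c l k * dyadicWavelet ψ l k x
    else 0

theorem rpow_mul_abs_le_iSup_abs_waveletTail {ψ : ℝ → ℝ} (hψc : Continuous ψ)
    (hψsupp : ∀ x, x ∉ Icc (0:ℝ) 1 → ψ x = 0) (hψ1 : ∫ x in (0:ℝ)..1, |ψ x| ≤ 1)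
    (horth : ∀ l k l' k' : ℕ, k < 2 ^ l → k' < 2 ^ l' →
      ∫ x in (0:ℝ)..1, dyadicWavelet ψ l k x * dyadicWavelet ψ l' k' x
        = if (l, k) = (l', k') then 1 else 0)
    {s B : ℝ} (hs : 0 < s) {c : ℕ → ℕ → ℝ} (hc : ∀ l k, |c l k| ≤ B) {j k : ℕ} (hk : k < 2 ^ j) :
    (2:ℝ) ^ (-(j:ℝ) * s) * |c j k| ≤ ⨆ x : Icc (0:ℝ) 1, |waveletTail ψ s j c x| := by
  have hscale (l : ℕ) : (2:ℝ) ^ ((l:ℝ) / 2) * (2:ℝ) ^ (-(l:ℝ) * (s + 1 / 2))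
      = (2:ℝ) ^ (-(l:ℝ) * s) := by
    rw [← Real.rpow_add two_pos]
    ring_nf
  set a : ℕ → ℕ → ℝ := fun l k => if j ≤ l then (2:ℝ) ^ (-(l:ℝ) * (s + 1 / 2)) * c l k else 0
  have htail : waveletTail ψ s j c = waveletSeries ψ a := by
    funext x
    refine tsum_congr fun l => ?_
    split_ifs with hl <;> simp [a, hl]
  have ha l k : |a l k| ≤ B * (2:ℝ) ^ (-(l:ℝ) * (s + 1 / 2)) := by
    have hB : 0 ≤ B := (abs_nonneg _).trans (hc l k)
    simp only [a]
    split_ifs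
    · rw [abs_mul, abs_of_pos (by positivity), mul_comm]
      gcongr
      exact hc l k
    · simp only [abs_zero]
      positivity
  have hA : Summable fun l : ℕ => (2:ℝ) ^ ((l:ℝ) / 2) * (B * (2:ℝ) ^ (-(l:ℝ) * (s + 1 / 2))) := by
    have hgeom (l : ℕ) : (2:ℝ) ^ (-(l:ℝ) * s) = ((2:ℝ) ^ (-s)) ^ l := by
      rw [← Real.rpow_natCast, ← Real.rpow_mul zero_le_two]
      ring_nf
    simp only [mul_left_comm _ B, hscale, hgeom]
    exact (summable_geometric_of_lt_one (by positivity)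
      (Real.rpow_lt_one_of_one_lt_of_neg one_lt_two (neg_neg_of_pos hs))).mul_left B
  have hcoeff := rpow_mul_abs_le_iSup_abs_waveletSeries hψc hψsupp hψ1 horth ha hA hk
  rw [← htail] at hcoeff
  convert hcoeff using 1
  simp only [a, le_refl, if_true, abs_mul, abs_of_pos (show (0:ℝ) < 2 ^ (-(j:ℝ) * (s + 1 / 2)) by
    positivity), ← mul_assoc, hscale]

section UniformLaw

variable {Ω : Type*} [MeasurableSpace Ω] {P : Measure Ω} {B : ℝ}

theorem ae_abs_le_of_map_eq_uniform {X : Ω → ℝ} (hX : Measurable X)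
    (hmap : P.map X = (ENNReal.ofReal (2 * B))⁻¹ • volume.restrict (Icc (-B) B)) :
    ∀ᵐ ω ∂P, |X ω| ≤ B := by
  have hout : P (X ⁻¹' (Icc (-B) B)ᶜ) = 0 := by
    rw [← Measure.map_apply hX measurableSet_Icc.compl, hmap]
    simp
  filter_upwards [measure_eq_zero_iff_ae_notMem.1 hout] with ω hω
  exact abs_le.2 (by simpa using hω)

theorem measure_abs_lt_le_of_map_eq_uniform {X : Ω → ℝ} (hX : Measurable X)
    (hmap : P.map X = (ENNReal.ofReal (2 * B))⁻¹ • volume.restrict (Icc (-B) B))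
    (hB : 0 < B) {ε : ℝ} (hε : 0 ≤ ε) :
    P {ω | |X ω| < ε * B} ≤ ENNReal.ofReal ε := by
  have hpre : {ω | |X ω| < ε * B} = X ⁻¹' Ioo (-(ε * B)) (ε * B) := by
    ext
    simp [abs_lt]
  have h2B : ENNReal.ofReal (2 * B) ≠ 0 := by simpa using hB
  rw [hpre, ← Measure.map_apply hX measurableSet_Ioo, hmap, Measure.smul_apply, smul_eq_mul,
    Measure.restrict_apply measurableSet_Ioo]
  calc (ENNReal.ofReal (2 * B))⁻¹ * volume (Ioo (-(ε * B)) (ε * B) ∩ Icc (-B) B)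
      ≤ (ENNReal.ofReal (2 * B))⁻¹ * (ENNReal.ofReal ε * ENNReal.ofReal (2 * B)) := by
        gcongr
        refine (measure_mono inter_subset_left).trans_eq ?_
        rw [Real.volume_Ioo, ← ENNReal.ofReal_mul hε]
        ring_nf
    _ = ENNReal.ofReal ε := by
        rw [mul_comm, mul_assoc, ENNReal.mul_inv_cancel h2B ENNReal.ofReal_ne_top, mul_one]

theorem measure_forall_abs_lt_le_of_iIndepFun {ι : Type*} {X : ι → Ω → ℝ} (hind : iIndepFun X P)
    (hX : ∀ i, Measurable (X i))
    (hmap : ∀ i, P.map (X i) = (ENNReal.ofReal (2 * B))⁻¹ • volume.restrict (Icc (-B) B))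
    (hB : 0 < B) {ε : ℝ} (hε : 0 ≤ ε) (T : Finset ι) :
    P {ω | ∀ i ∈ T, |X i ω| < ε * B} ≤ ENNReal.ofReal ε ^ T.card := by
  have hpre : {ω | ∀ i ∈ T, |X i ω| < ε * B} = ⋂ i ∈ T, X i ⁻¹' {y | |y| < ε * B} := by
    ext
    simp
  rw [hpre, hind.measure_inter_preimage_eq_mul _
    fun _ _ => measurableSet_lt (by fun_prop) measurable_const]
  exact Finset.prod_le_pow_card _ _ _ fun i _ =>
    measure_abs_lt_le_of_map_eq_uniform (hX i) (hmap i) hB hε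

end UniformLaw

theorem stmt5_general {Ω : Type*} [MeasurableSpace Ω] (P : Measure Ω)
    (s B ε : ℝ) (hs : 0 < s) (hB : 1 ≤ B) (hε : 0 < ε)
    (j : ℕ)
    (ψ : ℝ → ℝ) (hψc : Continuous ψ) (hψsupp : ∀ x, x ∉ Set.Icc (0:ℝ) 1 → ψ x = 0)
    (hψ1 : ∫ x in (0:ℝ)..1, |ψ x| ≤ 1)
    (horth : ∀ l k l' k' : ℕ, k < 2^l → k' < 2^l' →
      ∫ x in (0:ℝ)..1,
        ((2:ℝ)^((l:ℝ)/2) * ψ ((2:ℝ)^l * x - k)) * ((2:ℝ)^((l':ℝ)/2) * ψ ((2:ℝ)^l' * x - k'))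
        = if (l,k) = (l',k') then 1 else 0)
    (u : ℕ → ℕ → Ω → ℝ) (humeas : ∀ l k, Measurable (u l k))
    (hindep : iIndepFun (fun p : ℕ × ℕ => u p.1 p.2) P)
    (hunif : ∀ l k, Measure.map (u l k) P =
      (ENNReal.ofReal (2*B))⁻¹ • volume.restrict (Set.Icc (-B) B))
    (D : Ω → ℝ → ℝ)
    (hD : D = fun ω x => ∑' l : ℕ, if j ≤ l then
      ∑ k ∈ Finset.range (2^l),
        (2:ℝ)^(-(l:ℝ)*(s+1/2)) * u l k ω * ((2:ℝ)^((l:ℝ)/2) * ψ ((2:ℝ)^l * x - k))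
      else 0) :
    P {ω | (⨆ x : Set.Icc (0:ℝ) 1, |D ω x.1|) < ε * B * (2:ℝ)^(-(j:ℝ)*s)}
      ≤ ENNReal.ofReal (ε ^ (2^j)) := by
  have hB0 : 0 < B := by linarith
  have hbounded : ∀ᵐ ω ∂P, ∀ l k, |u l k ω| ≤ B := by
    simp only [ae_all_iff]
    exact fun l k => ae_abs_le_of_map_eq_uniform (humeas l k) (hunif l k)
  have hevent : {ω | (⨆ x : Icc (0:ℝ) 1, |D ω x.1|) < ε * B * (2:ℝ) ^ (-(j:ℝ) * s)}
      ≤ᵐ[P] {ω | ∀ k ∈ Finset.range (2 ^ j), |u j k ω| < ε * B} := by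
    filter_upwards [hbounded] with ω hω hsmall k hk
    have hcoeff : (2:ℝ) ^ (-(j:ℝ) * s) * |u j k ω| ≤ ⨆ x : Icc (0:ℝ) 1, |D ω x| := by
      subst hD
      exact rpow_mul_abs_le_iSup_abs_waveletTail hψc hψsupp hψ1 horth hs hω
        (Finset.mem_range.1 hk)
    change _ < _ at hsmall
    exact lt_of_mul_lt_mul_left (by linarith) (by positivity : (0:ℝ) ≤ 2 ^ (-(j:ℝ) * s))
  have hindep_j : iIndepFun (fun k => u j k) P :=
    hindep.precomp (g := fun k => (j, k)) fun _ _ h => (Prod.mk.inj h).2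
  calc P {ω | (⨆ x : Icc (0:ℝ) 1, |D ω x.1|) < ε * B * (2:ℝ) ^ (-(j:ℝ) * s)}
      ≤ P {ω | ∀ k ∈ Finset.range (2 ^ j), |u j k ω| < ε * B} := measure_mono_ae hevent
    _ ≤ ENNReal.ofReal ε ^ (Finset.range (2 ^ j)).card :=
        measure_forall_abs_lt_le_of_iIndepFun hindep_j (humeas j) (hunif j) hB0 hε.le _
    _ = ENNReal.ofReal (ε ^ (2 ^ j)) := by rw [Finset.card_range, ENNReal.ofReal_pow hε.le]

/-- for the random wavelet series prior with i.i.d. coefficients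
`u_{lk}` uniform on `[−B,B]`, `ψ_{lk}(x) = 2^{l/2}ψ(2^l x − k)`, `‖ψ‖₁ ≤ 1`,
and `K_j(U_s) − U_s = Σ_{l≥j} Σ_k 2^{−l(s+1/2)} u_{lk} ψ_{lk}`, one has
`P(‖K_j(U_s) − U_s‖_∞ < ε B 2^{−js}) ≤ ε^{2^j}`. -/
theorem stmt5 {Ω : Type*} [MeasurableSpace Ω] (P : Measure Ω) [IsProbabilityMeasure P]
    (s B ε : ℝ) (hs : 0 < s) (hB : 1 ≤ B) (hε : 0 < ε)
    (J j : ℕ) (hj : J ≤ j)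
    (ψ : ℝ → ℝ) (hψc : Continuous ψ) (hψsupp : ∀ x, x ∉ Set.Icc (0:ℝ) 1 → ψ x = 0)
    (hψ1 : ∫ x in (0:ℝ)..1, |ψ x| ≤ 1)
    (horth : ∀ l k l' k' : ℕ, k < 2^l → k' < 2^l' →
      ∫ x in (0:ℝ)..1,
        ((2:ℝ)^((l:ℝ)/2) * ψ ((2:ℝ)^l * x - k)) * ((2:ℝ)^((l':ℝ)/2) * ψ ((2:ℝ)^l' * x - k'))
        = if (l,k) = (l',k') then 1 else 0)
    (u : ℕ → ℕ → Ω → ℝ) (humeas : ∀ l k, Measurable (u l k))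
    (hindep : iIndepFun (fun p : ℕ × ℕ => u p.1 p.2) P)
    (hunif : ∀ l k, Measure.map (u l k) P =
      (ENNReal.ofReal (2*B))⁻¹ • volume.restrict (Set.Icc (-B) B))
    (D : Ω → ℝ → ℝ)
    (hD : D = fun ω x => ∑' l : ℕ, if j ≤ l then
      ∑ k ∈ Finset.range (2^l),
        (2:ℝ)^(-(l:ℝ)*(s+1/2)) * u l k ω * ((2:ℝ)^((l:ℝ)/2) * ψ ((2:ℝ)^l * x - k))
      else 0) :
    P {ω | (⨆ x : Set.Icc (0:ℝ) 1, |D ω x.1|) < ε * B * (2:ℝ)^(-(j:ℝ)*s)}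
      ≤ ENNReal.ofReal (ε ^ (2^j)) :=
  stmt5_general P s B ε hs hB hε j ψ hψc hψsupp hψ1 horth u humeas hindep hunif D hD
end

section
/- Let f be a continuous function on ℝ whose wavelet coefficients satisfy sup_k 2^{l/2}|β_{lk}(f)| ≤ B 2^{−ls} for all l ≥ 0 (f in a Hölder ball of radius B, smoothness s in the wavelet sense). Suppose moreover there exist ε > 0 and a level ℓ with ‖ψ‖_∞ Σ_{l ≥ ℓ'} 2^{l/2} sup_k |β_{lk}(f)| ≥ ε 2^{−ℓ's} for all ℓ' ≥ ℓ. Then there exists N ∈ ℕ depending only on ε, B, ψ, s such that for every ℓ' ≥ ℓ there is a level l̄ ∈ [ℓ', ℓ' + N − 1] with sup_k |β_{l̄ k}(f)| ≥ d(ε, B, ψ, s) 2^{−ℓ'(s+1/2)} for some constant d(ε, B, ψ, s) > 0. -/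
/-!
Put `a l = 2^{l/2} b l` and `r = 2^{-s} < 1`, so that `a l ≤ B rˡ`. The tail `Σ_{l ≥ m+N} a l` is
then at most `B r^{m+N} / (1 - r)`, which for a fixed `N` chosen large enough is at most half of the
assumed lower bound `(ε / Cψ) rᵐ` of `Σ_{l ≥ m} a l`. Hence the `N` levels `m, …, m+N-1` carry at
least `(ε / 2Cψ) rᵐ`, and by pigeonhole one of them carries `(ε / 2CψN) rᵐ`; multiplying back by
`2^{-l/2} ≥ 2^{-(m+N)/2}` gives the bound on `b`.
-/

open Finset Filter

lemma exists_mem_Ico_div_le_of_le_sum {a : ℕ → ℝ} {m N : ℕ} (hN : 0 < N) {T : ℝ}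
    (hT : T ≤ ∑ l ∈ Ico m (m + N), a l) : ∃ l ∈ Ico m (m + N), T / N ≤ a l := by
  refine exists_le_of_sum_le (nonempty_Ico.mpr (by omega)) ?_
  rwa [sum_const, Nat.card_Ico, Nat.add_sub_cancel_left, nsmul_eq_mul,
    mul_div_cancel₀ _ (by positivity)]

lemma tsum_ite_le_eq_sum_Ico_add_tsum {a : ℕ → ℝ} (ha : Summable a) (m N : ℕ) :
    ∑' l, (if m ≤ l then a l else 0) = ∑ l ∈ Ico m (m + N), a l + ∑' k, a (k + (m + N)) := by
  have hsum : Summable fun l => if m ≤ l then a l else 0 :=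
    ha.norm.of_norm_bounded fun l => by split_ifs <;> simp
  rw [← hsum.sum_add_tsum_nat_add (m + N), ← sum_filter]
  congr 1
  · congr 1; ext l; simp only [mem_filter, mem_range, mem_Ico]; omega
  · exact tsum_congr fun k => if_pos (by omega)

section GeometricDomination

variable {a : ℕ → ℝ} {B r : ℝ} (ha0 : ∀ l, 0 ≤ a l) (haB : ∀ l, a l ≤ B * r ^ l)
  (hr0 : 0 ≤ r) (hr1 : r < 1)
include ha0 haB hr0 hr1

lemma summable_of_le_geometric : Summable a :=
  .of_nonneg_of_le ha0 haB ((summable_geometric_of_lt_one hr0 hr1).mul_left B)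

lemma tsum_nat_add_le_of_le_geometric (m : ℕ) : ∑' k, a (k + m) ≤ B * r ^ m / (1 - r) :=
  calc ∑' k, a (k + m) ≤ ∑' k, B * r ^ m * r ^ k :=
        ((summable_of_le_geometric ha0 haB hr0 hr1).comp_injective
          (add_left_injective m)).tsum_le_tsum (fun k => (haB (k + m)).trans_eq (by ring))
          ((summable_geometric_of_lt_one hr0 hr1).mul_left _)
    _ = B * r ^ m / (1 - r) := by
        rw [tsum_mul_left, tsum_geometric_of_lt_one hr0 hr1, div_eq_mul_inv]

lemma exists_level_lower_bound_of_tail_lower_bound {c : ℝ} (hc : 0 < c) {ℓ : ℕ}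
    (hlow : ∀ m, ℓ ≤ m → c * r ^ m ≤ ∑' l, (if m ≤ l then a l else 0)) :
    ∃ N, 0 < N ∧ ∀ m, ℓ ≤ m → ∃ l ∈ Ico m (m + N), c * r ^ m / 2 / N ≤ a l := by
  have hsmall : ∀ᶠ N in atTop, B * r ^ N / (1 - r) < c / 2 := by
    have := ((tendsto_pow_atTop_nhds_zero_of_lt_one hr0 hr1).const_mul B).div_const (1 - r)
    rw [mul_zero, zero_div] at this
    exact this.eventually (gt_mem_nhds (by positivity))
  obtain ⟨N, hN, hNpos⟩ := (hsmall.and (eventually_gt_atTop 0)).exists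
  refine ⟨N, hNpos, fun m hm => exists_mem_Ico_div_le_of_le_sum hNpos ?_⟩
  have htail : ∑' k, a (k + (m + N)) ≤ c / 2 * r ^ m :=
    calc ∑' k, a (k + (m + N)) ≤ B * r ^ N / (1 - r) * r ^ m := by
          refine (tsum_nat_add_le_of_le_geometric ha0 haB hr0 hr1 _).trans_eq ?_
          rw [pow_add]; ring
      _ ≤ c / 2 * r ^ m := by gcongr
  have := hlow m hm
  rw [tsum_ite_le_eq_sum_Ico_add_tsum (summable_of_le_geometric ha0 haB hr0 hr1) m N] at this
  linarith

end GeometricDomination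

lemma two_rpow_neg_mul_eq_pow (s : ℝ) (l : ℕ) :
    (2 : ℝ) ^ (-(l : ℝ) * s) = ((2 : ℝ) ^ (-s)) ^ l := by
  rw [← Real.rpow_natCast, ← Real.rpow_mul zero_le_two]
  ring_nf

lemma inv_two_rpow_half_mul_le {T x : ℝ} {l n : ℕ} (hln : l ≤ n)
    (hT : T ≤ (2:ℝ) ^ ((l:ℝ)/2) * x) (hT0 : 0 ≤ T) : ((2:ℝ) ^ ((n:ℝ)/2))⁻¹ * T ≤ x :=
  calc ((2:ℝ) ^ ((n:ℝ)/2))⁻¹ * T ≤ ((2:ℝ) ^ ((l:ℝ)/2))⁻¹ * T := by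
        gcongr
        exact one_le_two
    _ ≤ x := by rwa [inv_mul_le_iff₀ (by positivity)]

theorem stmt7_general (s B ε Cψ : ℝ) (hs : 0 < s) (hε : 0 < ε) (hCψ : 0 < Cψ)
    (ℓ : ℕ) (b : ℕ → ℝ) (hb0 : ∀ l, 0 ≤ b l)
    (hbB : ∀ l : ℕ, (2:ℝ)^((l:ℝ)/2) * b l ≤ B * (2:ℝ)^(-(l:ℝ)*s))
    (hlow : ∀ ℓ' : ℕ, ℓ ≤ ℓ' →
      ε * (2:ℝ)^(-(ℓ':ℝ)*s)
        ≤ Cψ * ∑' l : ℕ, if ℓ' ≤ l then (2:ℝ)^((l:ℝ)/2) * b l else 0) :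
    ∃ N : ℕ, 0 < N ∧ ∃ d > 0, ∀ ℓ' : ℕ, ℓ ≤ ℓ' →
      ∃ lbar : ℕ, ℓ' ≤ lbar ∧ lbar ≤ ℓ' + N - 1 ∧
        d * (2:ℝ)^(-(ℓ':ℝ)*(s+1/2)) ≤ b lbar := by
  set a : ℕ → ℝ := fun l => (2:ℝ)^((l:ℝ)/2) * b l
  have hr0 : (0:ℝ) ≤ 2 ^ (-s) := by positivity
  have hr1 : (2:ℝ) ^ (-s) < 1 := Real.rpow_lt_one_of_one_lt_of_neg one_lt_two (neg_neg_of_pos hs)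
  have ha0 : ∀ l, 0 ≤ a l := fun l => mul_nonneg (by positivity) (hb0 l)
  have haB : ∀ l, a l ≤ B * (2 ^ (-s)) ^ l := fun l => two_rpow_neg_mul_eq_pow s l ▸ hbB l
  have hlow' : ∀ m, ℓ ≤ m → ε / Cψ * (2 ^ (-s)) ^ m ≤ ∑' l, if m ≤ l then a l else 0 :=
    fun m hm => by
      rw [← two_rpow_neg_mul_eq_pow, div_mul_eq_mul_div, div_le_iff₀' hCψ]
      exact hlow m hm
  obtain ⟨N, hN, hlevel⟩ :=
    exists_level_lower_bound_of_tail_lower_bound ha0 haB hr0 hr1 (by positivity) hlow'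
  refine ⟨N, hN, ε / (2 * Cψ * N) * 2 ^ (-(N:ℝ)/2), by positivity, fun m hm => ?_⟩
  obtain ⟨l, hl, hal⟩ := hlevel m hm
  rw [mem_Ico] at hl
  refine ⟨l, hl.1, by omega, ?_⟩
  have hpow : (2:ℝ) ^ (-(N:ℝ)/2) * 2 ^ (-(m:ℝ) * (s + 1/2))
      = 2 ^ (-(m:ℝ) * s) * ((2:ℝ) ^ (((m + N : ℕ) : ℝ) / 2))⁻¹ := by
    rw [← Real.rpow_neg zero_le_two, ← Real.rpow_add two_pos, ← Real.rpow_add two_pos]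
    push_cast
    ring_nf
  calc ε / (2 * Cψ * N) * 2 ^ (-(N:ℝ)/2) * (2:ℝ) ^ (-(m:ℝ) * (s + 1/2))
      = ((2:ℝ) ^ (((m + N : ℕ) : ℝ) / 2))⁻¹ * (ε / Cψ * (2 ^ (-s)) ^ m / 2 / N) := by
        rw [← two_rpow_neg_mul_eq_pow, mul_assoc, hpow]
        ring
    _ ≤ b l := inv_two_rpow_half_mul_le hl.2.le hal (by positivity)

/-- pigeonhole over wavelet levels. Here `b l` plays the role of
`sup_k |β_{lk}(f)|` and `Cψ = ‖ψ‖_∞`. If `2^{l/2} b l ≤ B 2^{−ls}` for all `l`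
and `Cψ Σ_{l ≥ ℓ'} 2^{l/2} b l ≥ ε 2^{−ℓ's}` for all `ℓ' ≥ ℓ`, then there is `N`
(depending only on `ε, B, Cψ, s`) and `d > 0` such that for every `ℓ' ≥ ℓ` some
level `l̄ ∈ [ℓ', ℓ'+N−1]` satisfies `b l̄ ≥ d 2^{−ℓ'(s+1/2)}`. -/
theorem stmt7 (s B ε Cψ : ℝ) (hs : 0 < s) (hB : 1 ≤ B) (hε : 0 < ε) (hCψ : 0 < Cψ)
    (ℓ : ℕ) (b : ℕ → ℝ) (hb0 : ∀ l, 0 ≤ b l)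
    (hbB : ∀ l : ℕ, (2:ℝ)^((l:ℝ)/2) * b l ≤ B * (2:ℝ)^(-(l:ℝ)*s))
    (hlow : ∀ ℓ' : ℕ, ℓ ≤ ℓ' →
      ε * (2:ℝ)^(-(ℓ':ℝ)*s)
        ≤ Cψ * ∑' l : ℕ, if ℓ' ≤ l then (2:ℝ)^((l:ℝ)/2) * b l else 0) :
    ∃ N : ℕ, 0 < N ∧ ∃ d > 0, ∀ ℓ' : ℕ, ℓ ≤ ℓ' →
      ∃ lbar : ℕ, ℓ' ≤ lbar ∧ lbar ≤ ℓ' + N - 1 ∧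
        d * (2:ℝ)^(-(ℓ':ℝ)*(s+1/2)) ≤ b lbar :=
  stmt7_general s B ε Cψ hs hε hCψ ℓ b hb0 hbB hlow
end

section
/- Let t > s > 0, B ≥ 1, and let ψ_{ℓm}(x) = 2^{ℓ/2}ψ(2^ℓ x − m) be an orthonormal wavelet with ∫ψ = 0 and ‖ψ‖₁ ≤ 1, supported in the interior of [0,1]. Let f = 1 + 2^{−ℓ(s+1/2)} ψ_{ℓm}. Then: (a) f is a probability density with Hölder-s wavelet norm at most max(1, 1) ≤ B; (b) the projection K_{ℓ+1}(f) at level ℓ+1 equals f, i.e. ‖K_{ℓ+1}(f) − f‖_∞ = 0; (c) inf_{g ∈ Σ(t,B)} ‖f − g‖_∞ ≥ 2^{−ℓs} − B 2^{−ℓt}, which is at least c 2^{−ℓs} for some c > 0 once 2^{−ℓ(t−s)} ≤ 1/(2B). -/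
/-! The bump `f = 1 + ε ψ_{ℓm}`, `ε = 2^{-ℓ(s+1/2)}`, has exactly one nonzero wavelet coefficient,
`⟨f, ψ_{ℓm}⟩ = ε`, which gives (a) and (b) at once. For (c), testing `f - g` against `ψ_{ℓm}`
and using `‖ψ_{ℓm}‖₁ ≤ 2^{-ℓ/2}` bounds `ε - |⟨g, ψ_{ℓm}⟩|` by `‖f - g‖_∞ 2^{-ℓ/2}`, while
membership of `g` in `Σ(t,B)` forces `|⟨g, ψ_{ℓm}⟩| ≤ B 2^{-ℓ(t+1/2)}`. -/

open Set intervalIntegral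

theorem abs_le_iSup_Icc_of_continuous {h : ℝ → ℝ} (hh : Continuous h) {a b x : ℝ}
    (hx : x ∈ Icc a b) : |h x| ≤ ⨆ y : Icc a b, |h y| :=
  le_ciSup (isCompact_range (f := fun y : Icc a b => |h y|) (by fun_prop)).bddAbove ⟨x, hx⟩

theorem abs_integral_mul_le_of_abs_le {h φ : ℝ → ℝ} {a b S : ℝ} (hab : a ≤ b)
    (hφ : IntervalIntegrable φ MeasureTheory.volume a b) (hS : ∀ x ∈ Icc a b, |h x| ≤ S) :
    |∫ x in a..b, h x * φ x| ≤ S * ∫ x in a..b, |φ x| := by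
  refine (norm_integral_le_of_norm_le (f := fun x => h x * φ x) hab
    (MeasureTheory.ae_of_all _ fun x hx => ?_) (hφ.abs.const_mul S)).trans_eq
    (integral_const_mul S _)
  rw [Real.norm_eq_abs, abs_mul]
  exact mul_le_mul_of_nonneg_right (hS x (Ioc_subset_Icc_self hx)) (abs_nonneg _)

theorem sub_le_iSup_abs_sub_mul {f g φ : ℝ → ℝ} {a b ε δ L : ℝ} (hab : a ≤ b)
    (hf : Continuous f) (hg : Continuous g) (hφ : Continuous φ)
    (hfφ : ∫ x in a..b, f x * φ x = ε) (hgφ : |∫ x in a..b, g x * φ x| ≤ δ)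
    (hL : ∫ x in a..b, |φ x| ≤ L) :
    ε - δ ≤ (⨆ x : Icc a b, |f x - g x|) * L := by
  set S := ⨆ x : Icc a b, |f x - g x|
  have hS : ∀ x ∈ Icc a b, |f x - g x| ≤ S := fun x hx =>
    abs_le_iSup_Icc_of_continuous (hf.sub hg) hx
  have hS0 : 0 ≤ S := (abs_nonneg _).trans (hS a (left_mem_Icc.2 hab))
  have hdiff : ∫ x in a..b, (f x - g x) * φ x = ε - ∫ x in a..b, g x * φ x := by
    simp_rw [sub_mul]
    rw [integral_sub (f := fun x => f x * φ x) (g := fun x => g x * φ x)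
      ((hf.mul hφ).intervalIntegrable _ _) ((hg.mul hφ).intervalIntegrable _ _), hfφ]
  calc ε - δ ≤ ε - ∫ x in a..b, g x * φ x := by
        linarith [le_abs_self (∫ x in a..b, g x * φ x)]
    _ ≤ |∫ x in a..b, (f x - g x) * φ x| := hdiff ▸ le_abs_self _
    _ ≤ S * ∫ x in a..b, |φ x| :=
        abs_integral_mul_le_of_abs_le hab (hφ.intervalIntegrable _ _) hS
    _ ≤ S * L := mul_le_mul_of_nonneg_left hL hS0

theorem le_mul_rpow_neg_of_rpow_mul_le {b y c B : ℝ} (hb : 0 < b) (h : b ^ y * c ≤ B) :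
    c ≤ B * b ^ (-y) := by
  rw [Real.rpow_neg hb.le, ← div_eq_mul_inv, le_div_iff₀ (by positivity), mul_comm]
  exact h

theorem two_rpow_neg_mul_add_half (x a : ℝ) :
    (2:ℝ) ^ (-x * (a + 1/2)) = (2:ℝ) ^ (-x * a) * (2:ℝ) ^ (-x / 2) := by
  rw [← Real.rpow_add two_pos]
  ring_nf

theorem mul_two_rpow_neg_mul_le_half {x s t B : ℝ} (hB : 0 < B)
    (hsmall : (2:ℝ) ^ (-x * (t - s)) ≤ 1 / (2 * B)) :
    B * (2:ℝ) ^ (-x * t) ≤ 1 / 2 * (2:ℝ) ^ (-x * s) := by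
  have hsplit : (2:ℝ) ^ (-x * t) = (2:ℝ) ^ (-x * (t - s)) * (2:ℝ) ^ (-x * s) := by
    rw [← Real.rpow_add two_pos]
    ring_nf
  rw [le_div_iff₀ (by positivity)] at hsmall
  rw [hsplit, ← mul_assoc]
  gcongr
  linarith

theorem one_add_mul_nonneg_of_mul_abs_le {ε y : ℝ} (hε : 0 ≤ ε) (h : ε * |y| ≤ 1) :
    0 ≤ 1 + ε * y := by
  have : |ε * y| ≤ 1 := by rwa [abs_mul, abs_of_nonneg hε]
  linarith [neg_abs_le (ε * y)]

theorem two_rpow_sub_le_iSup_abs_sub {f g φ : ℝ → ℝ} {x s t B : ℝ}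
    (hf : Continuous f) (hg : Continuous g) (hφ : Continuous φ)
    (hL1 : ∫ y in (0:ℝ)..1, |φ y| ≤ (2:ℝ) ^ (-x / 2))
    (hfφ : ∫ y in (0:ℝ)..1, f y * φ y = (2:ℝ) ^ (-x * (s + 1/2)))
    (hgφ : (2:ℝ) ^ (x * (t + 1/2)) * |∫ y in (0:ℝ)..1, g y * φ y| ≤ B) :
    (2:ℝ) ^ (-x * s) - B * (2:ℝ) ^ (-x * t) ≤ ⨆ y : Icc (0:ℝ) 1, |f y - g y| := by
  have hgφ' := le_mul_rpow_neg_of_rpow_mul_le two_pos hgφ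
  rw [← neg_mul, two_rpow_neg_mul_add_half] at hgφ'
  have h := sub_le_iSup_abs_sub_mul zero_le_one hf hg hφ hfφ hgφ' hL1
  rw [two_rpow_neg_mul_add_half, ← mul_assoc, ← sub_mul] at h
  exact le_of_mul_le_mul_right h (by positivity)

theorem integral_one_add_mul_mul_wavelet {Ψ : ℕ → ℕ → ℝ → ℝ}
    (hΨc : ∀ l k, Continuous (Ψ l k))
    (horth : ∀ l k l' k' : ℕ, k < 2^l → k' < 2^l' →
      ∫ x in (0:ℝ)..1, Ψ l k x * Ψ l' k' x = if (l,k) = (l',k') then 1 else 0)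
    (hmean : ∀ l k : ℕ, k < 2^l → ∫ x in (0:ℝ)..1, Ψ l k x = 0)
    {ℓ m l k : ℕ} (hm : m < 2^ℓ) (hk : k < 2^l) (ε : ℝ) :
    ∫ x in (0:ℝ)..1, (1 + ε * Ψ ℓ m x) * Ψ l k x = if (l, k) = (ℓ, m) then ε else 0 := by
  have hexp : ∀ x, (1 + ε * Ψ ℓ m x) * Ψ l k x = Ψ l k x + ε * (Ψ ℓ m x * Ψ l k x) :=
    fun x => by ring
  simp_rw [hexp]
  rw [integral_add (g := fun x => ε * (Ψ ℓ m x * Ψ l k x)) ((hΨc l k).intervalIntegrable _ _)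
      ((((hΨc ℓ m).mul (hΨc l k)).intervalIntegrable _ _).const_mul ε),
    integral_const_mul, hmean l k hk, horth ℓ m l k hm hk, zero_add]
  by_cases h : (l, k) = (ℓ, m) <;> simp [h, Ne.symm]

theorem stmt9_general (s t B : ℝ) (hB : 1 ≤ B)
    (ℓ m : ℕ) (hm : m < 2^ℓ)
    (Ψ : ℕ → ℕ → ℝ → ℝ) (hΨc : ∀ l k, Continuous (Ψ l k))
    (horth : ∀ l k l' k' : ℕ, k < 2^l → k' < 2^l' →
      ∫ x in (0:ℝ)..1, Ψ l k x * Ψ l' k' x = if (l,k) = (l',k') then 1 else 0)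
    (hmean : ∀ l k : ℕ, k < 2^l → ∫ x in (0:ℝ)..1, Ψ l k x = 0)
    (hL1 : ∀ l k : ℕ, k < 2^l → ∫ x in (0:ℝ)..1, |Ψ l k x| ≤ (2:ℝ)^(-(l:ℝ)/2))
    (f : ℝ → ℝ) (hf : f = fun x => 1 + (2:ℝ)^(-(ℓ:ℝ)*(s+1/2)) * Ψ ℓ m x)
    (hbd : ∀ x : ℝ, (2:ℝ)^(-(ℓ:ℝ)*(s+1/2)) * |Ψ ℓ m x| ≤ 1) :
    ((∀ x ∈ Set.Icc (0:ℝ) 1, 0 ≤ f x) ∧ ∫ x in (0:ℝ)..1, f x = 1)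
    ∧ (∀ l k : ℕ, k < 2^l →
        (2:ℝ)^((l:ℝ)*(s+1/2)) * |∫ x in (0:ℝ)..1, f x * Ψ l k x| ≤ B)
    ∧ (∀ l k : ℕ, k < 2^l → ℓ + 1 ≤ l → ∫ x in (0:ℝ)..1, f x * Ψ l k x = 0)
    ∧ (∀ g : ℝ → ℝ, Continuous g →
        (∀ l k : ℕ, k < 2^l →
          (2:ℝ)^((l:ℝ)*(t+1/2)) * |∫ x in (0:ℝ)..1, g x * Ψ l k x| ≤ B) →
        (2:ℝ)^(-(ℓ:ℝ)*s) - B * (2:ℝ)^(-(ℓ:ℝ)*t)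
          ≤ ⨆ x : Set.Icc (0:ℝ) 1, |f x.1 - g x.1|)
    ∧ ((2:ℝ)^(-(ℓ:ℝ)*(t-s)) ≤ 1/(2*B) → ∀ g : ℝ → ℝ, Continuous g →
        (∀ l k : ℕ, k < 2^l →
          (2:ℝ)^((l:ℝ)*(t+1/2)) * |∫ x in (0:ℝ)..1, g x * Ψ l k x| ≤ B) →
        (1/2) * (2:ℝ)^(-(ℓ:ℝ)*s) ≤ ⨆ x : Set.Icc (0:ℝ) 1, |f x.1 - g x.1|) := by
  set ε : ℝ := (2:ℝ)^(-(ℓ:ℝ)*(s+1/2)) with hε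
  have hfc : Continuous f := hf ▸ by fun_prop
  have hcoef : ∀ l k, k < 2^l →
      ∫ x in (0:ℝ)..1, f x * Ψ l k x = if (l, k) = (ℓ, m) then ε else 0 := fun l k hk =>
    hf ▸ integral_one_add_mul_mul_wavelet hΨc horth hmean hm hk ε
  have hsep : ∀ g : ℝ → ℝ, Continuous g →
      (∀ l k : ℕ, k < 2^l →
        (2:ℝ)^((l:ℝ)*(t+1/2)) * |∫ x in (0:ℝ)..1, g x * Ψ l k x| ≤ B) →
      (2:ℝ)^(-(ℓ:ℝ)*s) - B * (2:ℝ)^(-(ℓ:ℝ)*t) ≤ ⨆ x : Set.Icc (0:ℝ) 1, |f x.1 - g x.1| :=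
    fun g hg hgB => two_rpow_sub_le_iSup_abs_sub hfc hg (hΨc ℓ m) (hL1 ℓ m hm)
      ((hcoef ℓ m hm).trans (if_pos rfl)) (hgB ℓ m hm)
  refine ⟨⟨fun x _ => ?_, ?_⟩, fun l k hk => ?_, fun l k hk hl => ?_, hsep, ?_⟩
  · rw [hf]
    exact one_add_mul_nonneg_of_mul_abs_le (by positivity) (hbd x)
  · rw [hf, integral_add intervalIntegrable_const
      (((hΨc ℓ m).intervalIntegrable _ _).const_mul ε), integral_const_mul, hmean ℓ m hm]
    simp
  · rw [hcoef l k hk]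
    split_ifs with h
    · obtain ⟨rfl, -⟩ := Prod.ext_iff.mp h
      rw [abs_of_pos (by positivity), hε, neg_mul, Real.rpow_neg zero_le_two,
        mul_inv_cancel₀ (by positivity)]
      exact hB
    · simpa using zero_le_one.trans hB
  · rw [hcoef l k hk, if_neg fun h => by have := (Prod.ext_iff.mp h).1; omega]
  · intro hsmall g hg hgB
    linarith [hsep g hg hgB, mul_two_rpow_neg_mul_le_half (by linarith) hsmall]

/-- the key example `f = 1 + 2^{−ℓ(s+1/2)} ψ_{ℓm}` for an orthonormal,
mean-zero wavelet family `Ψ l k` with `‖Ψ l k‖₁ ≤ 2^{−l/2}`: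
(a) `f` is a probability density with Hölder-`s` wavelet norm at most `B`;
(b) all wavelet coefficients of `f` at levels `l ≥ ℓ+1` vanish, i.e.
    `K_{ℓ+1}(f) = f` and `‖K_{ℓ+1}(f) − f‖_∞ = 0`;
(c) for every `g ∈ Σ(t,B)` (wavelet sense), `‖f − g‖_∞ ≥ 2^{−ℓs} − B 2^{−ℓt}`,
    which is at least `(1/2) 2^{−ℓs}` once `2^{−ℓ(t−s)} ≤ 1/(2B)`. -/
theorem stmt9 (s t B : ℝ) (hs : 0 < s) (hst : s < t) (hB : 1 ≤ B)
    (ℓ m : ℕ) (hm : m < 2^ℓ)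
    (Ψ : ℕ → ℕ → ℝ → ℝ) (hΨc : ∀ l k, Continuous (Ψ l k))
    (horth : ∀ l k l' k' : ℕ, k < 2^l → k' < 2^l' →
      ∫ x in (0:ℝ)..1, Ψ l k x * Ψ l' k' x = if (l,k) = (l',k') then 1 else 0)
    (hmean : ∀ l k : ℕ, k < 2^l → ∫ x in (0:ℝ)..1, Ψ l k x = 0)
    (hL1 : ∀ l k : ℕ, k < 2^l → ∫ x in (0:ℝ)..1, |Ψ l k x| ≤ (2:ℝ)^(-(l:ℝ)/2))
    (f : ℝ → ℝ) (hf : f = fun x => 1 + (2:ℝ)^(-(ℓ:ℝ)*(s+1/2)) * Ψ ℓ m x)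
    (hbd : ∀ x : ℝ, (2:ℝ)^(-(ℓ:ℝ)*(s+1/2)) * |Ψ ℓ m x| ≤ 1) :
    ((∀ x ∈ Set.Icc (0:ℝ) 1, 0 ≤ f x) ∧ ∫ x in (0:ℝ)..1, f x = 1)
    ∧ (∀ l k : ℕ, k < 2^l →
        (2:ℝ)^((l:ℝ)*(s+1/2)) * |∫ x in (0:ℝ)..1, f x * Ψ l k x| ≤ B)
    ∧ (∀ l k : ℕ, k < 2^l → ℓ + 1 ≤ l → ∫ x in (0:ℝ)..1, f x * Ψ l k x = 0)
    ∧ (∀ g : ℝ → ℝ, Continuous g →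
        (∀ l k : ℕ, k < 2^l →
          (2:ℝ)^((l:ℝ)*(t+1/2)) * |∫ x in (0:ℝ)..1, g x * Ψ l k x| ≤ B) →
        (2:ℝ)^(-(ℓ:ℝ)*s) - B * (2:ℝ)^(-(ℓ:ℝ)*t)
          ≤ ⨆ x : Set.Icc (0:ℝ) 1, |f x.1 - g x.1|)
    ∧ ((2:ℝ)^(-(ℓ:ℝ)*(t-s)) ≤ 1/(2*B) → ∀ g : ℝ → ℝ, Continuous g →
        (∀ l k : ℕ, k < 2^l →
          (2:ℝ)^((l:ℝ)*(t+1/2)) * |∫ x in (0:ℝ)..1, g x * Ψ l k x| ≤ B) →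
        (1/2) * (2:ℝ)^(-(ℓ:ℝ)*s) ≤ ⨆ x : Set.Icc (0:ℝ) 1, |f x.1 - g x.1|) :=
  stmt9_general s t B hB ℓ m hm Ψ hΨc horth hmean hL1 f hf hbd
end
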